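/- Let b be the Hermitian inner product on ℂ² and define, for ψ ∈ ℂ², the vector V_ψ ∈ ℝ^{1,1} by g(V_ψ, X) = -⟨Φ(X)·ψ, ψ⟩_ℝ for all X ∈ ℝ^{1,1}, where Φ(e₁) = i·U, Φ(e₂) = V are the Clifford matrices for signature (1,1) and ⟨·,·⟩_ℝ denotes the real part of an appropriate Spin(1,1)-invariant sesquilinear form ⟨φ,ψ⟩ = (Φ(e₁)φ, ψ) with (·,·) the standard Hermitian product. Then g(V_ψ, V_ψ) ≤ 0 for every ψ ∈ ℂ², and V_ψ = 0 if and only if ψ = 0. -/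

import Mathlib

/-! Since `Φ(e₁) = diag(-1, 1)`, pairing with `e₁` and `e₂` gives
`V_ψ = (|ψ₀|² + |ψ₁|², 2 Im(ψ̄₁ψ₀))`. Hence, by `|Im z| ≤ |z|`,
`g(V_ψ, V_ψ) = -(|ψ₀|² + |ψ₁|²)² + 4 Im(ψ̄₁ψ₀)² ≤ -(|ψ₀|² - |ψ₁|²)² ≤ 0`,
and the time component `‖ψ‖²` of `V_ψ` vanishes only for `ψ = 0`. -/

open Matrix Complex ComplexConjugate

noncomputable section

namespace DiracCurrent

def cliffordE₁ : Matrix (Fin 2) (Fin 2) ℂ := I • !![I, 0; 0, -I]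

def cliffordE₂ : Matrix (Fin 2) (Fin 2) ℂ := !![0, I; I, 0]

def cliffordAction (X : Fin 2 → ℝ) : Matrix (Fin 2) (Fin 2) ℂ :=
  (X 0 : ℂ) • cliffordE₁ + (X 1 : ℂ) • cliffordE₂

def spinorForm (φ ψ : Fin 2 → ℂ) : ℂ := star (cliffordE₁ *ᵥ φ) ⬝ᵥ ψ

def minkowski (a b : Fin 2 → ℝ) : ℝ := -(a 0 * b 0) + a 1 * b 1

def diracCurrent (ψ : Fin 2 → ℂ) : Fin 2 → ℝ :=
  ![normSq (ψ 0) + normSq (ψ 1), 2 * (conj (ψ 1) * ψ 0).im]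

theorem re_spinorForm_cliffordAction (X : Fin 2 → ℝ) (ψ : Fin 2 → ℂ) :
    (spinorForm (cliffordAction X *ᵥ ψ) ψ).re = -minkowski (diracCurrent ψ) X := by
  simp [spinorForm, cliffordAction, cliffordE₁, cliffordE₂, minkowski, diracCurrent,
    dotProduct, Fin.sum_univ_two, normSq_apply]
  ring

theorem minkowski_left_injective {v w : Fin 2 → ℝ} (h : ∀ X, minkowski v X = minkowski w X) :
    v = w := by
  have h₀ := h (Pi.single 0 1)
  have h₁ := h (Pi.single 1 1)
  simp [minkowski] at h₀ h₁
  ext i; fin_cases i <;> simpa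

theorem four_mul_im_conj_mul_sq_le (a b : ℂ) :
    4 * (conj b * a).im ^ 2 ≤ (normSq a + normSq b) ^ 2 := by
  have hprod : (conj b * a).im ^ 2 ≤ normSq b * normSq a := by
    simpa [sq] using im_sq_le_normSq (conj b * a)
  nlinarith [sq_nonneg (normSq a - normSq b)]

theorem minkowski_diracCurrent_self_nonpos (ψ : Fin 2 → ℂ) :
    minkowski (diracCurrent ψ) (diracCurrent ψ) ≤ 0 := by
  have hspace := four_mul_im_conj_mul_sq_le (ψ 0) (ψ 1)
  simp only [minkowski, diracCurrent, cons_val_zero, cons_val_one]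
  nlinarith

theorem diracCurrent_eq_zero_iff (ψ : Fin 2 → ℂ) : diracCurrent ψ = 0 ↔ ψ = 0 := by
  constructor
  · intro hzero
    have hnorm : normSq (ψ 0) + normSq (ψ 1) = 0 := congrFun hzero 0
    rw [add_eq_zero_iff_of_nonneg (normSq_nonneg _) (normSq_nonneg _), normSq_eq_zero,
      normSq_eq_zero] at hnorm
    ext i; fin_cases i
    exacts [hnorm.1, hnorm.2]
  · rintro rfl
    ext i; fin_cases i <;> simp [diracCurrent]

end DiracCurrent

open DiracCurrent in
theorem dirac_current_is_causal_dim_two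
    (U V Φ₁ Φ₂ : Matrix (Fin 2) (Fin 2) ℂ)
    (hU : U = !![I, 0; 0, -I])
    (hV : V = !![0, I; I, 0])
    (hΦ₁ : Φ₁ = I • U)
    (hΦ₂ : Φ₂ = V)
    -- Clifford action of a vector `X ∈ ℝ^{1,1}` (coordinates in the basis `e₁, e₂`)
    (Φ : (Fin 2 → ℝ) → Matrix (Fin 2) (Fin 2) ℂ)
    (hΦ : ∀ X : Fin 2 → ℝ, Φ X = (X 0 : ℂ) • Φ₁ + (X 1 : ℂ) • Φ₂)
    -- the Spin(1,1)-invariant sesquilinear form `⟨φ,ψ⟩ = (Φ(e₁)·φ, ψ)`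
    (h : (Fin 2 → ℂ) → (Fin 2 → ℂ) → ℂ)
    (hh : ∀ φ ψ : Fin 2 → ℂ, h φ ψ = star (Φ₁.mulVec φ) ⬝ᵥ ψ)
    -- the Lorentzian metric of signature (-,+) on `ℝ^{1,1}`
    (g : (Fin 2 → ℝ) → (Fin 2 → ℝ) → ℝ)
    (hg : ∀ a b : Fin 2 → ℝ, g a b = -(a 0 * b 0) + a 1 * b 1)
    (ψ : Fin 2 → ℂ) (Vψ : Fin 2 → ℝ)
    -- the Dirac current: `g(V_ψ, X) = -⟨Φ(X)·ψ, ψ⟩_ℝ` for all `X`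
    (hV' : ∀ X : Fin 2 → ℝ, g Vψ X = -(h ((Φ X).mulVec ψ) ψ).re) :
    g Vψ Vψ ≤ 0 ∧ (Vψ = 0 ↔ ψ = 0) := by
  subst hU hV hΦ₁ hΦ₂
  obtain rfl : Φ = cliffordAction := funext hΦ
  obtain rfl : h = spinorForm := funext₂ hh
  obtain rfl : g = minkowski := funext₂ hg
  obtain rfl : Vψ = diracCurrent ψ := minkowski_left_injective fun X => by
    rw [hV', re_spinorForm_cliffordAction, neg_neg]
  exact ⟨minkowski_diracCurrent_self_nonpos ψ, diracCurrent_eq_zero_iff ψ⟩
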